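/- One-step drop bound for the NPG update: with π_{t+1}(a|s) = π_t(a|s)exp(β(w^⊤φ(s,a) − V^{π_t}(s)))/Z_t(s), for any starting distribution μ, V^{π_{t+1}}(μ) − V^{π_t}(μ) ≥ (1/(1−γ))·E_{s∼d^{t+1}} Σ_a (π_t(a|s) − π_{t+1}(a|s))(w^⊤φ(s,a) − Q^{π_t}(s,a)) − E_{s∼μ} Σ_a π_t(a|s)(w^⊤φ(s,a) − Q^{π_t}(s,a)) + (1/β)·E_{s∼μ} log Z_t(s), where d^{t+1} = d^{π_{t+1}}_μ. -/

import Mathlib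

open Finset

/-- A finite discounted MDP with rewards bounded by 1. -/
structure MDP (S A : Type) [Fintype S] [Fintype A] where
  P : S → A → S → ℝ
  R : S → A → ℝ
  γ : ℝ
  P_nonneg : ∀ s a s', 0 ≤ P s a s'
  P_sum : ∀ s a, ∑ s', P s a s' = 1
  R_bound : ∀ s a, |R s a| ≤ 1
  γ_pos : 0 < γ
  γ_lt_one : γ < 1

/-- `π` is a (stationary, randomized) policy. -/
def IsPolicy {S A : Type} [Fintype S] [Fintype A] (π : S → A → ℝ) : Prop :=
  (∀ s a, 0 ≤ π s a) ∧ ∀ s, ∑ a, π s a = 1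

/-- `Q` is the state-action value function of `π`, characterized by the
Bellman equation. -/
def IsQ {S A : Type} [Fintype S] [Fintype A] (M : MDP S A)
    (π : S → A → ℝ) (Q : S → A → ℝ) : Prop :=
  ∀ s a, Q s a = M.R s a + M.γ * ∑ s', M.P s a s' * ∑ a', π s' a' * Q s' a'

/-- The state value function induced by policy `π` and state-action values `Q`. -/
def Vval {S A : Type} [Fintype S] [Fintype A] (π : S → A → ℝ)
    (Q : S → A → ℝ) (s : S) : ℝ :=
  ∑ a, π s a * Q s a

/-- `t`-step transition probabilities of the state chain induced by policy `π`. -/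
def prS {S A : Type} [Fintype S] [Fintype A] [DecidableEq S] (M : MDP S A)
    (π : S → A → ℝ) : ℕ → S → S → ℝ
  | 0 => fun s0 s => if s0 = s then 1 else 0
  | (t+1) => fun s0 s => ∑ s'', prS M π t s0 s'' * ∑ a, π s'' a * M.P s'' a s

/-- Discounted state visitation distribution `d^π_μ`. -/
noncomputable def dvisit {S A : Type} [Fintype S] [Fintype A] [DecidableEq S]
    (M : MDP S A) (π : S → A → ℝ) (μ : S → ℝ) (s : S) : ℝ :=
  (1 - M.γ) * ∑ s0, μ s0 * ∑' t : ℕ, M.γ^t * prS M π t s0 s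

section Helpers

variable {S A : Type} [Fintype S] [Fintype A] [DecidableEq S]

lemma prS_nonneg (M : MDP S A) {π : S → A → ℝ} (hπ : ∀ s a, 0 ≤ π s a) :
    ∀ t s0 s, 0 ≤ prS M π t s0 s := by
  intro t
  induction t with
  | zero =>
    intro s0 s; simp only [prS]; split <;> norm_num
  | succ n ih =>
    intro s0 s
    apply Finset.sum_nonneg
    intro s'' _
    exact mul_nonneg (ih _ _)
      (Finset.sum_nonneg fun a _ => mul_nonneg (hπ _ _) (M.P_nonneg _ _ _))

lemma prS_sum (M : MDP S A) {π : S → A → ℝ} (hπ : IsPolicy π) :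
    ∀ t s0, ∑ s, prS M π t s0 s = 1 := by
  intro t
  induction t with
  | zero => intro s0; simp [prS]
  | succ n ih =>
    intro s0
    simp only [prS]
    rw [Finset.sum_comm]
    calc ∑ s'', ∑ s, prS M π n s0 s'' * ∑ a, π s'' a * M.P s'' a s
        = ∑ s'', prS M π n s0 s'' * ∑ s, ∑ a, π s'' a * M.P s'' a s := by
          simp [Finset.mul_sum]
      _ = ∑ s'', prS M π n s0 s'' := by
          apply Finset.sum_congr rfl; intro s'' _
          rw [Finset.sum_comm]
          have h1 : ∑ a, ∑ s, π s'' a * M.P s'' a s = 1 := by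
            have : ∀ a ∈ Finset.univ (α := A), ∑ s, π s'' a * M.P s'' a s = π s'' a := by
              intro a _
              rw [← Finset.mul_sum, M.P_sum, mul_one]
            rw [Finset.sum_congr rfl this, hπ.2 s'']
          rw [h1, mul_one]
      _ = 1 := ih s0

lemma prS_le_one (M : MDP S A) {π : S → A → ℝ} (hπ : IsPolicy π) (t : ℕ) (s0 s : S) :
    prS M π t s0 s ≤ 1 := by
  calc prS M π t s0 s ≤ ∑ s', prS M π t s0 s' :=
        Finset.single_le_sum (fun s' _ => prS_nonneg M hπ.1 t s0 s') (Finset.mem_univ s)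
    _ = 1 := prS_sum M hπ t s0

end Helpers

section PDLsec

variable {S A : Type} [Fintype S] [Fintype A] [DecidableEq S]

lemma geom_summable {γ : ℝ} (hγ0 : 0 ≤ γ) (hγ1 : γ < 1) (c : ℕ → ℝ) (C : ℝ)
    (hC : ∀ k, |c k| ≤ C) : Summable (fun k => γ ^ k * c k) := by
  apply Summable.of_norm_bounded (g := fun k => γ ^ k * C)
    ((summable_geometric_of_lt_one hγ0 hγ1).mul_right C)
  intro k
  rw [Real.norm_eq_abs, abs_mul, abs_pow, abs_of_nonneg hγ0]
  exact mul_le_mul_of_nonneg_left (hC k) (pow_nonneg hγ0 k)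

lemma pdl_step (M : MDP S A) {π π' : S → A → ℝ} {Q Q' : S → A → ℝ}
    (hQ : IsQ M π Q) (hQ' : IsQ M π' Q') (s : S) :
    Vval π' Q' s - Vval π Q s = ((∑ a, π' s a * Q s a) - Vval π Q s) +
      M.γ * ∑ s', (∑ a, π' s a * M.P s a s') * (Vval π' Q' s' - Vval π Q s') := by
  have hdiff : ∀ a, Q' s a - Q s a
      = M.γ * ∑ s', M.P s a s' * (Vval π' Q' s' - Vval π Q s') := by
    intro a
    have e1 : ∑ s', M.P s a s' * (Vval π' Q' s' - Vval π Q s')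
        = (∑ s', M.P s a s' * Vval π' Q' s') - ∑ s', M.P s a s' * Vval π Q s' := by
      rw [← Finset.sum_sub_distrib]
      exact Finset.sum_congr rfl fun s' _ => mul_sub _ _ _
    rw [hQ' s a, hQ s a, e1]
    simp only [Vval]
    ring
  have e2 : Vval π' Q' s - ∑ a, π' s a * Q s a = ∑ a, π' s a * (Q' s a - Q s a) := by
    simp only [Vval, ← Finset.sum_sub_distrib]
    exact Finset.sum_congr rfl fun a _ => (mul_sub _ _ _).symm
  have e3 : ∑ a, π' s a * (Q' s a - Q s a)
      = M.γ * ∑ s', (∑ a, π' s a * M.P s a s') * (Vval π' Q' s' - Vval π Q s') := by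
    calc ∑ a, π' s a * (Q' s a - Q s a)
        = ∑ a, ∑ s', M.γ * (π' s a * (M.P s a s' * (Vval π' Q' s' - Vval π Q s'))) := by
          refine Finset.sum_congr rfl fun a _ => ?_
          rw [hdiff a, Finset.mul_sum, Finset.mul_sum]
          exact Finset.sum_congr rfl fun s' _ => by ring
      _ = ∑ s', ∑ a, M.γ * (π' s a * (M.P s a s' * (Vval π' Q' s' - Vval π Q s'))) :=
          Finset.sum_comm
      _ = M.γ * ∑ s', (∑ a, π' s a * M.P s a s') * (Vval π' Q' s' - Vval π Q s') := by
          rw [Finset.mul_sum]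
          refine Finset.sum_congr rfl fun s' _ => ?_
          rw [Finset.sum_mul, Finset.mul_sum]
          exact Finset.sum_congr rfl fun a _ => by ring
  linarith [e2, e3]

lemma pdl_unroll (M : MDP S A) {π π' : S → A → ℝ} {Q Q' : S → A → ℝ}
    (hQ : IsQ M π Q) (hQ' : IsQ M π' Q') :
    ∀ (n : ℕ) (s0 : S), Vval π' Q' s0 - Vval π Q s0 =
      (∑ k ∈ Finset.range n, M.γ ^ k *
        ∑ s, prS M π' k s0 s * ((∑ a, π' s a * Q s a) - Vval π Q s)) +
      M.γ ^ n * ∑ s, prS M π' n s0 s * (Vval π' Q' s - Vval π Q s) := by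
  intro n
  induction n with
  | zero => intro s0; simp [prS]
  | succ n ih =>
    intro s0
    rw [Finset.sum_range_succ]
    have h2 : ∑ s, prS M π' n s0 s * (Vval π' Q' s - Vval π Q s)
        = (∑ s, prS M π' n s0 s * ((∑ a, π' s a * Q s a) - Vval π Q s)) +
          M.γ * ∑ s', prS M π' (n+1) s0 s' * (Vval π' Q' s' - Vval π Q s') := by
      have key : ∀ (c e : ℝ) (f : S → ℝ), c * (e * ∑ s', f s') = e * ∑ s', c * f s' := by
        intro c e f
        calc c * (e * ∑ s', f s') = e * (c * ∑ s', f s') := by ring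
          _ = e * ∑ s', c * f s' := by rw [Finset.mul_sum]
      calc ∑ s, prS M π' n s0 s * (Vval π' Q' s - Vval π Q s)
          = ∑ s, prS M π' n s0 s * (((∑ a, π' s a * Q s a) - Vval π Q s) +
              M.γ * ∑ s', (∑ a, π' s a * M.P s a s') * (Vval π' Q' s' - Vval π Q s')) :=
            Finset.sum_congr rfl fun s _ => by rw [← pdl_step M hQ hQ' s]
        _ = (∑ s, prS M π' n s0 s * ((∑ a, π' s a * Q s a) - Vval π Q s)) +
            M.γ * ∑ s, ∑ s', (prS M π' n s0 s * (∑ a, π' s a * M.P s a s')) *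
              (Vval π' Q' s' - Vval π Q s') := by
            rw [Finset.mul_sum, ← Finset.sum_add_distrib]
            refine Finset.sum_congr rfl fun s _ => ?_
            rw [mul_add]
            congr 1
            rw [key]
            congr 1
            exact Finset.sum_congr rfl fun s' _ => by ring
        _ = (∑ s, prS M π' n s0 s * ((∑ a, π' s a * Q s a) - Vval π Q s)) +
            M.γ * ∑ s', prS M π' (n+1) s0 s' * (Vval π' Q' s' - Vval π Q s') := by
            congr 1
            rw [Finset.sum_comm]
            congr 1
            refine Finset.sum_congr rfl fun s' _ => ?_
            show _ = prS M π' (n+1) s0 s' * _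
            simp only [prS]
            rw [Finset.sum_mul]
    rw [ih s0, h2]
    ring

lemma pdl_hasSum (M : MDP S A) {π π' : S → A → ℝ} (hπ' : IsPolicy π')
    {Q Q' : S → A → ℝ} (hQ : IsQ M π Q) (hQ' : IsQ M π' Q') (s0 : S) :
    HasSum (fun k => M.γ ^ k *
        ∑ s, prS M π' k s0 s * ((∑ a, π' s a * Q s a) - Vval π Q s))
      (Vval π' Q' s0 - Vval π Q s0) := by
  have hγ0 : (0:ℝ) ≤ M.γ := le_of_lt M.γ_pos
  have hγ1 : M.γ < 1 := M.γ_lt_one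
  have hbound : ∀ (f : S → ℝ) (k : ℕ) (s1 : S),
      |∑ s, prS M π' k s1 s * f s| ≤ ∑ s, |f s| := by
    intro f k s1
    calc |∑ s, prS M π' k s1 s * f s| ≤ ∑ s, |prS M π' k s1 s * f s| :=
          Finset.abs_sum_le_sum_abs _ _
      _ ≤ ∑ s, |f s| := by
          refine Finset.sum_le_sum fun s _ => ?_
          rw [abs_mul, abs_of_nonneg (prS_nonneg M hπ'.1 k s1 s)]
          exact mul_le_of_le_one_left (abs_nonneg _) (prS_le_one M hπ' k s1 s)
  have hsummg : Summable (fun k => M.γ ^ k *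
      ∑ s, prS M π' k s0 s * ((∑ a, π' s a * Q s a) - Vval π Q s)) :=
    geom_summable hγ0 hγ1 _ _ (fun k => hbound _ k s0)
  have htend := hsummg.hasSum.tendsto_sum_nat
  have heq : ∀ n, ∑ k ∈ Finset.range n, M.γ ^ k *
      ∑ s, prS M π' k s0 s * ((∑ a, π' s a * Q s a) - Vval π Q s)
      = (Vval π' Q' s0 - Vval π Q s0) -
        M.γ ^ n * ∑ s, prS M π' n s0 s * (Vval π' Q' s - Vval π Q s) := by
    intro n
    have := pdl_unroll M hQ hQ' n s0
    linarith
  have h0 : Filter.Tendsto (fun n => M.γ ^ n *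
      ∑ s, prS M π' n s0 s * (Vval π' Q' s - Vval π Q s)) Filter.atTop (nhds 0) := by
    apply squeeze_zero_norm (a := fun n => M.γ ^ n * ∑ s, |Vval π' Q' s - Vval π Q s|)
    · intro n
      rw [Real.norm_eq_abs, abs_mul, abs_pow, abs_of_nonneg hγ0]
      exact mul_le_mul_of_nonneg_left (hbound _ n s0) (pow_nonneg hγ0 n)
    · have := (tendsto_pow_atTop_nhds_zero_of_lt_one hγ0 hγ1).mul_const
        (∑ s, |Vval π' Q' s - Vval π Q s|)
      rwa [zero_mul] at this
  have htend2 : Filter.Tendsto (fun n => ∑ k ∈ Finset.range n, M.γ ^ k *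
      ∑ s, prS M π' k s0 s * ((∑ a, π' s a * Q s a) - Vval π Q s)) Filter.atTop
      (nhds (Vval π' Q' s0 - Vval π Q s0)) := by
    simp only [heq]
    have := (tendsto_const_nhds (x := Vval π' Q' s0 - Vval π Q s0)
      (f := Filter.atTop (α := ℕ))).sub h0
    rwa [sub_zero] at this
  have : (∑' k, M.γ ^ k *
      ∑ s, prS M π' k s0 s * ((∑ a, π' s a * Q s a) - Vval π Q s))
      = Vval π' Q' s0 - Vval π Q s0 := tendsto_nhds_unique htend htend2
  rw [← this]
  exact hsummg.hasSum

noncomputable def Dfun (M : MDP S A) (π' : S → A → ℝ) (μ : S → ℝ) (s : S) : ℝ :=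
  ∑' k : ℕ, M.γ ^ k * ∑ s0, μ s0 * prS M π' k s0 s

lemma mul_mul_sum {ι : Type} [Fintype ι] (c e : ℝ) (f : ι → ℝ) :
    c * (e * ∑ x, f x) = ∑ x, c * (e * f x) := by
  rw [← mul_assoc, Finset.mul_sum]
  exact Finset.sum_congr rfl fun x _ => by ring

lemma Dfun_summable (M : MDP S A) {π' : S → A → ℝ} (hπ' : IsPolicy π') {μ : S → ℝ}
    (hμnn : ∀ s, 0 ≤ μ s) (hμsum : ∑ s, μ s = 1) (s : S) :
    Summable (fun k => M.γ ^ k * ∑ s0, μ s0 * prS M π' k s0 s) := by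
  apply geom_summable (le_of_lt M.γ_pos) M.γ_lt_one _ 1
  intro k
  rw [abs_of_nonneg (Finset.sum_nonneg fun s0 _ =>
    mul_nonneg (hμnn s0) (prS_nonneg M hπ'.1 k s0 s))]
  calc ∑ s0, μ s0 * prS M π' k s0 s ≤ ∑ s0, μ s0 :=
        Finset.sum_le_sum fun s0 _ =>
          mul_le_of_le_one_right (hμnn s0) (prS_le_one M hπ' k s0 s)
    _ = 1 := hμsum

lemma dvisit_eq_Dfun (M : MDP S A) {π' : S → A → ℝ} (hπ' : IsPolicy π')
    (μ : S → ℝ) (s : S) :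
    dvisit M π' μ s = (1 - M.γ) * Dfun M π' μ s := by
  unfold dvisit Dfun
  congr 1
  have hsummable : ∀ s0 : S, Summable (fun k : ℕ => μ s0 * (M.γ ^ k * prS M π' k s0 s)) := by
    intro s0
    exact (geom_summable (le_of_lt M.γ_pos) M.γ_lt_one _ 1 (fun k => by
      rw [abs_of_nonneg (prS_nonneg M hπ'.1 k s0 s)]
      exact prS_le_one M hπ' k s0 s)).mul_left _
  calc ∑ s0, μ s0 * ∑' k : ℕ, M.γ ^ k * prS M π' k s0 s
      = ∑ s0, ∑' k : ℕ, μ s0 * (M.γ ^ k * prS M π' k s0 s) :=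
        Finset.sum_congr rfl fun s0 _ => tsum_mul_left.symm
    _ = ∑' k : ℕ, ∑ s0, μ s0 * (M.γ ^ k * prS M π' k s0 s) :=
        (Summable.tsum_finsetSum fun s0 _ => hsummable s0).symm
    _ = ∑' k : ℕ, M.γ ^ k * ∑ s0, μ s0 * prS M π' k s0 s := by
        refine tsum_congr fun k => ?_
        rw [Finset.mul_sum]
        exact Finset.sum_congr rfl fun s0 _ => by ring

lemma Dfun_nonneg (M : MDP S A) {π' : S → A → ℝ} (hπ' : IsPolicy π') {μ : S → ℝ}
    (hμnn : ∀ s, 0 ≤ μ s) (s : S) : 0 ≤ Dfun M π' μ s :=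
  tsum_nonneg fun k => mul_nonneg (pow_nonneg (le_of_lt M.γ_pos) k)
    (Finset.sum_nonneg fun s0 _ => mul_nonneg (hμnn s0) (prS_nonneg M hπ'.1 k s0 s))

lemma mu_le_Dfun (M : MDP S A) {π' : S → A → ℝ} (hπ' : IsPolicy π') {μ : S → ℝ}
    (hμnn : ∀ s, 0 ≤ μ s) (hμsum : ∑ s, μ s = 1) (s : S) :
    μ s ≤ Dfun M π' μ s := by
  have hsum := Dfun_summable M hπ' hμnn hμsum s
  have h0 : M.γ ^ 0 * ∑ s0, μ s0 * prS M π' 0 s0 s = μ s := by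
    simp [prS]
  calc μ s = M.γ ^ 0 * ∑ s0, μ s0 * prS M π' 0 s0 s := h0.symm
    _ ≤ Dfun M π' μ s := Summable.le_tsum hsum 0 (fun k _ =>
        mul_nonneg (pow_nonneg (le_of_lt M.γ_pos) k)
          (Finset.sum_nonneg fun s0 _ => mul_nonneg (hμnn s0) (prS_nonneg M hπ'.1 k s0 s)))

lemma pdl_mu (M : MDP S A) {π π' : S → A → ℝ} (hπ' : IsPolicy π')
    {Q Q' : S → A → ℝ} (hQ : IsQ M π Q) (hQ' : IsQ M π' Q')
    {μ : S → ℝ} (hμnn : ∀ s, 0 ≤ μ s) (hμsum : ∑ s, μ s = 1)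
    (g : S → ℝ) (hgdef : ∀ s, g s = (∑ a, π' s a * Q s a) - Vval π Q s) :
    ∑ s0, μ s0 * (Vval π' Q' s0 - Vval π Q s0) = ∑ s, Dfun M π' μ s * g s := by
  have hHS : ∀ s0 : S, HasSum (fun k => M.γ ^ k * ∑ s, prS M π' k s0 s * g s)
      (Vval π' Q' s0 - Vval π Q s0) := by
    intro s0
    have := pdl_hasSum M hπ' hQ hQ' s0
    simp only [← hgdef] at this
    exact this
  have hsum0 : ∀ s0 : S, Summable (fun k : ℕ =>
      μ s0 * (M.γ ^ k * ∑ s, prS M π' k s0 s * g s)) :=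
    fun s0 => ((hHS s0).summable).mul_left _
  have hsum2 : ∀ s : S, Summable (fun k : ℕ =>
      (M.γ ^ k * ∑ s0, μ s0 * prS M π' k s0 s) * g s) :=
    fun s => (Dfun_summable M hπ' hμnn hμsum s).mul_right _
  calc ∑ s0, μ s0 * (Vval π' Q' s0 - Vval π Q s0)
      = ∑ s0, ∑' k : ℕ, μ s0 * (M.γ ^ k * ∑ s, prS M π' k s0 s * g s) :=
        Finset.sum_congr rfl fun s0 _ => by
          rw [← (hHS s0).tsum_eq, tsum_mul_left]
    _ = ∑' k : ℕ, ∑ s0, μ s0 * (M.γ ^ k * ∑ s, prS M π' k s0 s * g s) :=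
        (Summable.tsum_finsetSum fun s0 _ => hsum0 s0).symm
    _ = ∑' k : ℕ, ∑ s, (M.γ ^ k * ∑ s0, μ s0 * prS M π' k s0 s) * g s := by
        refine tsum_congr fun k => ?_
        calc ∑ s0, μ s0 * (M.γ ^ k * ∑ s, prS M π' k s0 s * g s)
            = ∑ s0, ∑ s, μ s0 * (M.γ ^ k * (prS M π' k s0 s * g s)) :=
              Finset.sum_congr rfl fun s0 _ => mul_mul_sum _ _ _
          _ = ∑ s, ∑ s0, μ s0 * (M.γ ^ k * (prS M π' k s0 s * g s)) := Finset.sum_comm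
          _ = ∑ s, (M.γ ^ k * ∑ s0, μ s0 * prS M π' k s0 s) * g s := by
              refine Finset.sum_congr rfl fun s _ => ?_
              rw [Finset.mul_sum, Finset.sum_mul]
              exact Finset.sum_congr rfl fun s0 _ => by ring
    _ = ∑ s, ∑' k : ℕ, (M.γ ^ k * ∑ s0, μ s0 * prS M π' k s0 s) * g s :=
        Summable.tsum_finsetSum fun s _ => hsum2 s
    _ = ∑ s, Dfun M π' μ s * g s :=
        Finset.sum_congr rfl fun s _ => tsum_mul_right

end PDLsec

section Pointwise

variable {A : Type} [Fintype A]

lemma jensen_exp (p x : A → ℝ) (hp : ∀ a, 0 ≤ p a) (hp1 : ∑ a, p a = 1) :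
    Real.exp (∑ a, p a * x a) ≤ ∑ a, p a * Real.exp (x a) := by
  have h := convexOn_exp.map_sum_le (t := Finset.univ) (w := p) (p := x)
    (fun a _ => hp a) hp1 (fun a _ => Set.mem_univ _)
  simpa only [smul_eq_mul] using h

lemma Z_pos (p x : A → ℝ) (hp : ∀ a, 0 ≤ p a) (hp1 : ∑ a, p a = 1) :
    0 < ∑ a, p a * Real.exp (x a) :=
  lt_of_lt_of_le (Real.exp_pos _) (jensen_exp p x hp hp1)

lemma log_Z_ge (p x : A → ℝ) (hp : ∀ a, 0 ≤ p a) (hp1 : ∑ a, p a = 1) :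
    ∑ a, p a * x a ≤ Real.log (∑ a, p a * Real.exp (x a)) :=
  (Real.le_log_iff_exp_le (Z_pos p x hp hp1)).2 (jensen_exp p x hp hp1)

lemma gibbs (p q x : A → ℝ) (Z : ℝ) (hp : ∀ a, 0 ≤ p a) (hp1 : ∑ a, p a = 1)
    (hq1 : ∑ a, q a = 1) (hZ : Z = ∑ a, p a * Real.exp (x a))
    (hq : ∀ a, q a = p a * Real.exp (x a) / Z) :
    Real.log Z ≤ ∑ a, q a * x a := by
  have hZpos : 0 < Z := hZ ▸ Z_pos p x hp hp1
  have hpt : ∀ a, q a - p a ≤ q a * (x a - Real.log Z) := by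
    intro a
    rcases eq_or_lt_of_le (hp a) with h0 | hpa
    · have hqa : q a = 0 := by rw [hq a, ← h0, zero_mul, zero_div]
      rw [hqa, ← h0]
      simp
    · have hqa : 0 < q a := by
        rw [hq a]
        exact div_pos (mul_pos hpa (Real.exp_pos _)) hZpos
      have hxa : x a - Real.log Z = Real.log (q a / p a) := by
        have : q a / p a = Real.exp (x a) / Z := by
          rw [hq a]
          field_simp
        rw [this, Real.log_div (Real.exp_ne_zero _) (ne_of_gt hZpos), Real.log_exp]
      rw [hxa]
      have hlog : Real.log (p a / q a) ≤ p a / q a - 1 :=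
        Real.log_le_sub_one_of_pos (div_pos hpa hqa)
      have hloginv : Real.log (q a / p a) = - Real.log (p a / q a) := by
        rw [← Real.log_inv]
        congr 1
        rw [inv_div]
      rw [hloginv]
      have h1 : 1 - p a / q a ≤ - Real.log (p a / q a) := by linarith
      calc q a - p a = q a * (1 - p a / q a) := by field_simp
        _ ≤ q a * (- Real.log (p a / q a)) :=
            mul_le_mul_of_nonneg_left h1 (le_of_lt hqa)
  have hsum := Finset.sum_le_sum (fun a (_ : a ∈ Finset.univ) => hpt a)
  rw [Finset.sum_sub_distrib, hq1, hp1, sub_self] at hsum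
  have hexp : ∑ a, q a * (x a - Real.log Z) = (∑ a, q a * x a) - Real.log Z := by
    calc ∑ a, q a * (x a - Real.log Z) = ∑ a, (q a * x a - q a * Real.log Z) :=
          Finset.sum_congr rfl fun a _ => mul_sub _ _ _
      _ = (∑ a, q a * x a) - ∑ a, q a * Real.log Z := Finset.sum_sub_distrib _ _
      _ = (∑ a, q a * x a) - Real.log Z := by rw [← Finset.sum_mul, hq1, one_mul]
  linarith [hsum, hexp.symm.le, hexp.le]

lemma key_ineq {A : Type} [Fintype A] (p q u QQ : A → ℝ) (β V ZZ D m : ℝ)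
    (hβ : 0 < β) (hp : ∀ a, 0 ≤ p a) (hp1 : ∑ a, p a = 1) (hq1 : ∑ a, q a = 1)
    (hV : V = ∑ a, p a * QQ a)
    (hZ : ZZ = ∑ a, p a * Real.exp (β * (u a - V)))
    (hupd : ∀ a, q a = p a * Real.exp (β * (u a - V)) / ZZ)
    (hD0 : 0 ≤ D) (hDm : m ≤ D) :
    D * (∑ a, (p a - q a) * (u a - QQ a)) - m * (∑ a, p a * (u a - QQ a))
      + m * ((1/β) * Real.log ZZ)
    ≤ D * ((∑ a, q a * QQ a) - V) := by
  have hB : Real.log ZZ ≤ ∑ a, q a * (β * (u a - V)) :=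
    gibbs p q (fun a => β * (u a - V)) ZZ hp hp1 hq1 hZ hupd
  have hA : ∑ a, p a * (β * (u a - V)) ≤ Real.log ZZ := by
    have := log_Z_ge p (fun a => β * (u a - V)) hp hp1
    rwa [← hZ] at this
  have eA : ∑ a, p a * (β * (u a - V)) = β * ((∑ a, p a * u a) - V) := by
    have h1 : ∀ a, p a * (β * (u a - V)) = β * (p a * u a) - (β * V) * p a := fun a => by ring
    rw [Finset.sum_congr rfl fun a _ => h1 a, Finset.sum_sub_distrib, ← Finset.mul_sum,
      ← Finset.mul_sum, hp1]
    ring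
  have eC : ∑ a, q a * (β * (u a - V)) = β * ((∑ a, q a * u a) - V) := by
    have h1 : ∀ a, q a * (β * (u a - V)) = β * (q a * u a) - (β * V) * q a := fun a => by ring
    rw [Finset.sum_congr rfl fun a _ => h1 a, Finset.sum_sub_distrib, ← Finset.mul_sum,
      ← Finset.mul_sum, hq1]
    ring
  have eh2 : ∑ a, p a * (u a - QQ a) = (∑ a, p a * u a) - V := by
    calc ∑ a, p a * (u a - QQ a) = ∑ a, (p a * u a - p a * QQ a) :=
          Finset.sum_congr rfl fun a _ => by ring
      _ = (∑ a, p a * u a) - ∑ a, p a * QQ a := Finset.sum_sub_distrib _ _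
      _ = (∑ a, p a * u a) - V := by rw [hV]
  have eh1 : ∑ a, (p a - q a) * (u a - QQ a)
      = ((∑ a, p a * u a) - V) - ((∑ a, q a * u a) - (∑ a, q a * QQ a)) := by
    calc ∑ a, (p a - q a) * (u a - QQ a)
        = ∑ a, ((p a * u a - p a * QQ a) - (q a * u a - q a * QQ a)) :=
          Finset.sum_congr rfl fun a _ => by ring
      _ = (∑ a, (p a * u a - p a * QQ a)) - ∑ a, (q a * u a - q a * QQ a) :=
          Finset.sum_sub_distrib _ _
      _ = ((∑ a, p a * u a) - ∑ a, p a * QQ a) - ((∑ a, q a * u a) - ∑ a, q a * QQ a) := by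
          rw [Finset.sum_sub_distrib, Finset.sum_sub_distrib]
      _ = ((∑ a, p a * u a) - V) - ((∑ a, q a * u a) - (∑ a, q a * QQ a)) := by rw [hV]
  rw [eh1, eh2]
  rw [eA] at hA
  rw [eC] at hB
  set sp := ∑ a, p a * u a with hsp
  set sq := ∑ a, q a * u a with hsq
  set E := ∑ a, q a * QQ a with hE
  set L := Real.log ZZ with hL
  have hA' : sp - V ≤ L / β := (le_div_iff₀ hβ).mpr (by rw [mul_comm]; exact hA)
  have hB' : L / β ≤ sq - V := (div_le_iff₀ hβ).mpr (by rw [mul_comm]; exact hB)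
  have hdiv : (1/β) * L = L / β := one_div_mul_eq_div β L
  rw [hdiv]
  have k1 : m * (L / β - (sp - V)) ≤ D * (L / β - (sp - V)) :=
    mul_le_mul_of_nonneg_right hDm (by linarith)
  have k2 : D * (L / β - (sp - V)) ≤ D * ((sq - V) - (sp - V)) :=
    mul_le_mul_of_nonneg_left (by linarith) hD0
  nlinarith [k1, k2]

end Pointwise


/-- One-step drop bound for the NPG update. -/
theorem stmt_13 {S A : Type} [Fintype S] [Fintype A] [DecidableEq S]
    (M : MDP S A) (d : ℕ) (φ : S → A → Fin d → ℝ) (w : Fin d → ℝ)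
    (β : ℝ) (hβ : 0 < β)
    (πt πt1 : S → A → ℝ) (hπt : IsPolicy πt) (hπt1 : IsPolicy πt1)
    (Qt Qt1 : S → A → ℝ) (hQt : IsQ M πt Qt) (hQt1 : IsQ M πt1 Qt1)
    (Z : S → ℝ)
    (hZ : ∀ s, Z s = ∑ a', πt s a' *
      Real.exp (β * ((∑ i, w i * φ s a' i) - Vval πt Qt s)))
    (hUpd : ∀ s a, πt1 s a = πt s a *
      Real.exp (β * ((∑ i, w i * φ s a i) - Vval πt Qt s)) / Z s)
    (μ : S → ℝ) (hμnn : ∀ s, 0 ≤ μ s) (hμsum : ∑ s, μ s = 1) :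
    (∑ s, μ s * Vval πt1 Qt1 s) - (∑ s, μ s * Vval πt Qt s) ≥
      (1 / (1 - M.γ)) * ∑ s, dvisit M πt1 μ s *
          ∑ a, (πt s a - πt1 s a) * ((∑ i, w i * φ s a i) - Qt s a)
      - ∑ s, μ s * ∑ a, πt s a * ((∑ i, w i * φ s a i) - Qt s a)
      + (1 / β) * ∑ s, μ s * Real.log (Z s) := by
  have hLHS : (∑ s, μ s * Vval πt1 Qt1 s) - (∑ s, μ s * Vval πt Qt s)
      = ∑ s, Dfun M πt1 μ s * ((∑ a, πt1 s a * Qt s a) - Vval πt Qt s) := by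
    rw [← Finset.sum_sub_distrib]
    calc ∑ s, (μ s * Vval πt1 Qt1 s - μ s * Vval πt Qt s)
        = ∑ s, μ s * (Vval πt1 Qt1 s - Vval πt Qt s) :=
          Finset.sum_congr rfl fun s _ => (mul_sub _ _ _).symm
      _ = _ := pdl_mu M hπt1 hQt hQt1 hμnn hμsum
          (fun s => (∑ a, πt1 s a * Qt s a) - Vval πt Qt s) (fun s => rfl)
  have hfrac : (1 / (1 - M.γ)) * ∑ s, dvisit M πt1 μ s *
      ∑ a, (πt s a - πt1 s a) * ((∑ i, w i * φ s a i) - Qt s a)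
      = ∑ s, Dfun M πt1 μ s *
        ∑ a, (πt s a - πt1 s a) * ((∑ i, w i * φ s a i) - Qt s a) := by
    rw [Finset.mul_sum]
    refine Finset.sum_congr rfl fun s _ => ?_
    rw [dvisit_eq_Dfun M hπt1 μ s]
    have hne : (1 - M.γ) ≠ 0 := by have := M.γ_lt_one; intro h; linarith
    field_simp
  have hμc : (1 / β) * ∑ s, μ s * Real.log (Z s)
      = ∑ s, μ s * ((1/β) * Real.log (Z s)) := by
    rw [Finset.mul_sum]
    exact Finset.sum_congr rfl fun s _ => by ring
  rw [ge_iff_le, hLHS, hfrac, hμc, ← Finset.sum_sub_distrib, ← Finset.sum_add_distrib]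
  refine Finset.sum_le_sum fun s _ => ?_
  exact key_ineq (πt s) (πt1 s) (fun a => ∑ i, w i * φ s a i) (Qt s) β (Vval πt Qt s)
    (Z s) (Dfun M πt1 μ s) (μ s) hβ (fun a => hπt.1 s a) (hπt.2 s) (hπt1.2 s) rfl
    (hZ s) (fun a => hUpd s a) (Dfun_nonneg M hπt1 hμnn s) (mu_le_Dfun M hπt1 hμnn hμsum s)
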